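/- Let n ≥ 1 and let λ₁ ≤ λ₂ ≤ ⋯ ≤ λₙ be real numbers with λᵢ = −λ_{n+1−i} for all i, with −1 < λᵢ < 1 and λᵢ ≠ 0 for all i, and whose Newton polygon G takes integer values at every breakpoint. Then there exists d ∈ {−1, 0, 1}ⁿ with dᵢ = −d_{n+1−i} for all i, such that for every 1 ≤ i ≤ n − 1 the partial sum P(i) = d₁ + ⋯ + dᵢ satisfies P(i) ≤ G(i), with equality if and only if i is a breakpoint of (λ₁,…,λₙ). (In other words, there exists an antisymmetric lattice path from (0,0) to (n,0) with steps (1,−1), (1,0), (1,1) lying weakly below the symmetric Newton polygon and touching it precisely at the initial point, end point and breakpoints.) -/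

import Mathlib

/-!
Let `G` be the Newton polygon. At every vertex of `G` (the endpoints and the breakpoints) the
value `G i` is an integer; put `P i = G i` there, and let `P i` be the largest integer strictly
below `G i` elsewhere. Then `G i - 1 ≤ P i ≤ G i` with equality exactly at the vertices, and since
`|G i - G (i - 1)| = |λᵢ| < 1` the steps `P i - P (i - 1)` lie in `{-1, 0, 1}`. The antisymmetry
of `λ` makes both `G` and its set of vertices invariant under `i ↦ n - i`, hence so is `P`, which
makes the steps antisymmetric.
-/

open Finset

theorem Finset.sum_Icc_one_sub_pred {M : Type*} [AddCommGroup M] (f : ℕ → M) (i : ℕ) :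
    ∑ t ∈ Icc 1 i, (f t - f (t - 1)) = f i - f 0 := by
  induction i with
  | zero => simp
  | succ k ih =>
    rw [sum_Icc_succ_top (by omega), ih, Nat.add_sub_cancel]
    abel

section LatticeBelow

open Classical in
-- `⌈x⌉ - 1` is the largest integer strictly below `x`.
noncomputable def latticeBelow (x : ℝ) (touch : Prop) : ℤ :=
  if touch then ⌈x⌉ else ⌈x⌉ - 1

variable {x y : ℝ} {touch touch' : Prop}

theorem latticeBelow_le (hx : touch → ∃ m : ℤ, x = m) : (latticeBelow x touch : ℝ) ≤ x := by
  by_cases h : touch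
  · obtain ⟨m, rfl⟩ := hx h
    simp [latticeBelow, h]
  · have := Int.ceil_lt_add_one x
    simp only [latticeBelow, h, if_false, Int.cast_sub, Int.cast_one]
    linarith

theorem sub_one_le_latticeBelow : x - 1 ≤ latticeBelow x touch := by
  have := Int.le_ceil x
  by_cases h : touch <;> simp only [latticeBelow, h, if_true, if_false, Int.cast_sub,
    Int.cast_one] <;> linarith

theorem latticeBelow_eq_iff (hx : touch → ∃ m : ℤ, x = m) :
    (latticeBelow x touch : ℝ) = x ↔ touch := by
  refine ⟨fun heq => ?_, fun h => ?_⟩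
  · by_contra h
    have := Int.ceil_lt_add_one x
    simp only [latticeBelow, h, if_false, Int.cast_sub, Int.cast_one] at heq
    linarith
  · obtain ⟨m, rfl⟩ := hx h
    simp [latticeBelow, h]

theorem abs_latticeBelow_sub_latticeBelow_le_one (hxy : |x - y| < 1)
    (hx : touch → ∃ m : ℤ, x = m) (hy : touch' → ∃ m : ℤ, y = m) :
    |latticeBelow x touch - latticeBelow y touch'| ≤ 1 := by
  have h₁ := latticeBelow_le hx
  have h₂ := latticeBelow_le hy
  have h₃ := sub_one_le_latticeBelow (x := x) (touch := touch)
  have h₄ := sub_one_le_latticeBelow (x := y) (touch := touch')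
  have hreal : |((latticeBelow x touch - latticeBelow y touch' : ℤ) : ℝ)| < 2 := by
    rw [abs_lt] at hxy ⊢
    push_cast
    constructor <;> linarith
  have hint : |latticeBelow x touch - latticeBelow y touch'| < 2 := by exact_mod_cast hreal
  rw [abs_lt] at hint
  rw [abs_le]
  omega

end LatticeBelow

section NewtonPolygon

variable {lam : ℕ → ℝ} {n i : ℕ}

def newtonPolygon (lam : ℕ → ℝ) (i : ℕ) : ℝ := ∑ t ∈ Icc 1 i, lam t

def IsNewtonVertex (lam : ℕ → ℝ) (n i : ℕ) : Prop := i = 0 ∨ i = n ∨ lam i ≠ lam (i + 1)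

@[simp]
theorem newtonPolygon_zero : newtonPolygon lam 0 = 0 := by
  simp [newtonPolygon]

theorem newtonPolygon_succ (i : ℕ) :
    newtonPolygon lam (i + 1) = newtonPolygon lam i + lam (i + 1) :=
  sum_Icc_succ_top (by omega) lam

variable (hsym : ∀ i, 1 ≤ i → i ≤ n → lam i = -lam (n + 1 - i))
include hsym

theorem newtonPolygon_sub_sub_newtonPolygon (hi : i ≤ n) :
    newtonPolygon lam (n - i) - newtonPolygon lam i = newtonPolygon lam n := by
  induction i with
  | zero => simp
  | succ k ih =>
    have hstep := newtonPolygon_succ (lam := lam) (n - (k + 1))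
    have hlam := hsym (k + 1) (by omega) hi
    rw [show n - (k + 1) + 1 = n - k by omega] at hstep
    rw [show n + 1 - (k + 1) = n - k by omega] at hlam
    rw [newtonPolygon_succ, ← ih (by omega)]
    linarith

theorem newtonPolygon_self : newtonPolygon lam n = 0 := by
  have := newtonPolygon_sub_sub_newtonPolygon hsym (le_refl n)
  simp only [Nat.sub_self, newtonPolygon_zero] at this
  linarith

theorem newtonPolygon_sub (hi : i ≤ n) : newtonPolygon lam (n - i) = newtonPolygon lam i := by
  have := newtonPolygon_sub_sub_newtonPolygon hsym hi
  rw [newtonPolygon_self hsym] at this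
  linarith

theorem isNewtonVertex_sub_iff (hi : i ≤ n) :
    IsNewtonVertex lam n (n - i) ↔ IsNewtonVertex lam n i := by
  rcases Nat.eq_zero_or_pos i with rfl | hi₀
  · simp [IsNewtonVertex]
  rcases hi.eq_or_lt with rfl | hin
  · simp [IsNewtonVertex]
  have h₁ := hsym i hi₀ hi
  have h₂ := hsym (i + 1) (by omega) hin
  rw [show n + 1 - i = n - i + 1 by omega] at h₁
  rw [show n + 1 - (i + 1) = n - i by omega] at h₂
  have hbreak : lam (n - i) = lam (n - i + 1) ↔ lam i = lam (i + 1) := by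
    constructor <;> intro h <;> linarith
  simp only [IsNewtonVertex, ne_eq, hbreak, show n - i ≠ 0 by omega, show n - i ≠ n by omega,
    hi₀.ne', hin.ne, false_or]

end NewtonPolygon

section NewtonLowerPath

variable {lam : ℕ → ℝ} {n i : ℕ}

noncomputable def newtonLowerPath (lam : ℕ → ℝ) (n i : ℕ) : ℤ :=
  latticeBelow (newtonPolygon lam i) (IsNewtonVertex lam n i)

@[simp]
theorem newtonLowerPath_zero : newtonLowerPath lam n 0 = 0 := by
  simp [newtonLowerPath, latticeBelow, IsNewtonVertex]

variable (hsym : ∀ i, 1 ≤ i → i ≤ n → lam i = -lam (n + 1 - i))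

include hsym in
theorem newtonLowerPath_sub (hi : i ≤ n) :
    newtonLowerPath lam n (n - i) = newtonLowerPath lam n i := by
  simp only [newtonLowerPath, newtonPolygon_sub hsym hi, isNewtonVertex_sub_iff hsym hi]

variable (hint : ∀ i, 1 ≤ i → i ≤ n - 1 → lam i ≠ lam (i + 1) →
  ∃ m : ℤ, newtonPolygon lam i = m)
include hsym hint

theorem exists_intCast_of_isNewtonVertex (hi : i ≤ n) (hv : IsNewtonVertex lam n i) :
    ∃ m : ℤ, newtonPolygon lam i = m := by
  rcases Nat.eq_zero_or_pos i with rfl | hi₀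
  · exact ⟨0, by simp⟩
  rcases hi.eq_or_lt with rfl | hin
  · exact ⟨0, by simp [newtonPolygon_self hsym]⟩
  exact hint i hi₀ (by omega) ((hv.resolve_left hi₀.ne').resolve_left hin.ne)

theorem newtonLowerPath_le (hi : i ≤ n) : (newtonLowerPath lam n i : ℝ) ≤ newtonPolygon lam i :=
  latticeBelow_le (exists_intCast_of_isNewtonVertex hsym hint hi)

theorem newtonLowerPath_eq_iff (hi : i ≤ n) :
    (newtonLowerPath lam n i : ℝ) = newtonPolygon lam i ↔ IsNewtonVertex lam n i :=
  latticeBelow_eq_iff (exists_intCast_of_isNewtonVertex hsym hint hi)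

theorem abs_newtonLowerPath_sub_pred_le_one (hi₀ : 1 ≤ i) (hi : i ≤ n) (hlam : |lam i| < 1) :
    |newtonLowerPath lam n i - newtonLowerPath lam n (i - 1)| ≤ 1 := by
  have hstep := newtonPolygon_succ (lam := lam) (i - 1)
  rw [Nat.sub_add_cancel hi₀] at hstep
  refine abs_latticeBelow_sub_latticeBelow_le_one ?_
    (exists_intCast_of_isNewtonVertex hsym hint hi)
    (exists_intCast_of_isNewtonVertex hsym hint (by omega))
  rwa [hstep, add_sub_cancel_left]

end NewtonLowerPath

theorem stmt8_general (n : ℕ) (lam : ℕ → ℝ)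
    (hsym : ∀ i, 1 ≤ i → i ≤ n → lam i = - lam (n + 1 - i))
    (hbound : ∀ i, 1 ≤ i → i ≤ n → -1 < lam i ∧ lam i < 1)
    (hint : ∀ i, 1 ≤ i → i ≤ n - 1 → lam i ≠ lam (i + 1) →
      ∃ m : ℤ, (∑ t ∈ Finset.Icc 1 i, lam t) = (m : ℝ)) :
    ∃ d : ℕ → ℤ,
      (∀ i, 1 ≤ i → i ≤ n →
        (d i = -1 ∨ d i = 0 ∨ d i = 1) ∧ d i = - d (n + 1 - i)) ∧
      ∀ i, 1 ≤ i → i ≤ n - 1 →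
        ((∑ t ∈ Finset.Icc 1 i, (d t : ℝ)) ≤ (∑ t ∈ Finset.Icc 1 i, lam t) ∧
         ((∑ t ∈ Finset.Icc 1 i, (d t : ℝ)) = (∑ t ∈ Finset.Icc 1 i, lam t) ↔
           lam i ≠ lam (i + 1))) := by
  refine ⟨fun i => newtonLowerPath lam n i - newtonLowerPath lam n (i - 1),
    fun i hi₀ hin => ⟨?_, ?_⟩, fun i hi₀ hin => ?_⟩ <;> beta_reduce
  · have hstep := abs_le.mp <|
      abs_newtonLowerPath_sub_pred_le_one hsym hint hi₀ hin (abs_lt.mpr (hbound i hi₀ hin))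
    omega
  · have hpred := newtonLowerPath_sub hsym (i := i - 1) (by omega)
    rw [show n - (i - 1) = n + 1 - i by omega] at hpred
    rw [show n + 1 - i - 1 = n - i by omega, hpred, newtonLowerPath_sub hsym hin]
    ring
  · have hvertex : IsNewtonVertex lam n i ↔ lam i ≠ lam (i + 1) := by
      simp only [IsNewtonVertex, (show i ≠ 0 by omega), (show i ≠ n by omega), false_or]
    rw [← Int.cast_sum, sum_Icc_one_sub_pred, newtonLowerPath_zero, sub_zero]
    exact ⟨newtonLowerPath_le hsym hint (by omega),
      (newtonLowerPath_eq_iff hsym hint (by omega)).trans hvertex⟩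

/-- Let `n ≥ 1` and let `λ₁ ≤ ⋯ ≤ λₙ` be reals with
`λᵢ = −λ_{n+1−i}` for all `i`, with `−1 < λᵢ < 1` and `λᵢ ≠ 0` for all `i`, and
whose Newton polygon `G(i) = λ₁ + ⋯ + λᵢ` takes integer values at every
breakpoint (an index `1 ≤ i ≤ n−1` with `λᵢ ≠ λᵢ₊₁`).  Then there exists
`d ∈ {−1,0,1}ⁿ` with `dᵢ = −d_{n+1−i}` for all `i`, such that for every
`1 ≤ i ≤ n−1` the partial sum `P(i) = d₁ + ⋯ + dᵢ` satisfies `P(i) ≤ G(i)`,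
with equality iff `i` is a breakpoint of `(λ₁,…,λₙ)`. -/
theorem stmt8 (n : ℕ) (hn : 1 ≤ n) (lam : ℕ → ℝ)
    (hmono : ∀ i, 1 ≤ i → i < n → lam i ≤ lam (i + 1))
    (hsym : ∀ i, 1 ≤ i → i ≤ n → lam i = - lam (n + 1 - i))
    (hbound : ∀ i, 1 ≤ i → i ≤ n → -1 < lam i ∧ lam i < 1)
    (hne : ∀ i, 1 ≤ i → i ≤ n → lam i ≠ 0)
    (hint : ∀ i, 1 ≤ i → i ≤ n - 1 → lam i ≠ lam (i + 1) →
      ∃ m : ℤ, (∑ t ∈ Finset.Icc 1 i, lam t) = (m : ℝ)) :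
    ∃ d : ℕ → ℤ,
      (∀ i, 1 ≤ i → i ≤ n →
        (d i = -1 ∨ d i = 0 ∨ d i = 1) ∧ d i = - d (n + 1 - i)) ∧
      ∀ i, 1 ≤ i → i ≤ n - 1 →
        ((∑ t ∈ Finset.Icc 1 i, (d t : ℝ)) ≤ (∑ t ∈ Finset.Icc 1 i, lam t) ∧
         ((∑ t ∈ Finset.Icc 1 i, (d t : ℝ)) = (∑ t ∈ Finset.Icc 1 i, lam t) ↔
           lam i ≠ lam (i + 1))) :=
  stmt8_general n lam hsym hbound hint
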